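/- Let π : E → X be a left fibration of simplicial spaces and x a point of X. Then the evaluation map ev_{id_x} : Map_X(x\X, E) → (E_x)₀ induced by the inclusion {id_x} ↪ x\X is a trivial fibration of simplicial sets. In particular, any two maps f, g : x\X → E over X with f(id_x) ∼ g(id_x) in E_x are homotopic over X. -/

import Mathlib

/-!
The path space `x\X` contracts onto `id_x` through the initial vertex of `F[1]`: the map
`H(s, γ) = γ ∘ min(-, s)` is the constant path at `s = 0`, the identity at `s = 1`, and
fixes `id_x`. Running `H` along `Δ[n]` exhibits the inclusion
`x\X ⊗ ∂Δ[n] ∪ {id_x} ⊗ Δ[n] ⟶ x\X ⊗ Δ[n]` as a retract of its pushout-product with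
`F[0] ⟶ F[1]`, against which the left fibration `π` has the right lifting property; by
adjunction, lifting against this inclusion is lifting `∂Δ[n] ⟶ Δ[n]` against `ev_{id_x}`.
The homotopy statement is the case `n = 1`: an edge of `(E_x)₀` from `f(id_x)` to `g(id_x)`
lifts to an edge of `Map_X(x\X, E)` from `f` to `g`.
-/

set_option maxHeartbeats 1000000
set_option synthInstance.maxHeartbeats 400000

set_option linter.unnecessarySimpa false

open CategoryTheory CategoryTheory.Limits MonoidalCategory Simplicial SSet
open CategoryTheory.CartesianClosed

namespace KQ

/-- Simplicial spaces (bisimplicial sets): presheaves on `Δ × Δ`.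
The first coordinate is the "categorical" (simplicial) direction, the second
the "space" direction. -/
abbrev sSp := (SimplexCategory × SimplexCategory)ᵒᵖ ⥤ Type

noncomputable example : MonoidalClosed sSp := inferInstance

/-- The `n`-th space `X_n` of a simplicial space. -/
@[simps]
def lvl (X : sSp) (n : SimplexCategory) : SSet where
  obj m := X.obj (Opposite.op (n, m.unop))
  map {m m'} f := X.map (Quiver.Hom.op ((𝟙 n, f.unop) : (n, m'.unop) ⟶ (n, m.unop)))
  map_id m := by
    show X.map (Quiver.Hom.op ((𝟙 n, (𝟙 m).unop) : (n, m.unop) ⟶ (n, m.unop))) = 𝟙 _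
    have : ((𝟙 n, (𝟙 m).unop) : (n, m.unop) ⟶ (n, m.unop)) = 𝟙 (n, m.unop) := rfl
    rw [this]; exact X.map_id _
  map_comp {m m' m''} f g := by
    show X.map _ = X.map _ ≫ X.map _
    rw [← X.map_comp, ← op_comp]
    congr 1

/-- Functoriality of the spaces `X_n` in the simplicial direction. -/
@[simps]
def lmap (X : sSp) {n n' : SimplexCategory} (a : n ⟶ n') : lvl X n' ⟶ lvl X n where
  app m := X.map (Quiver.Hom.op ((a, 𝟙 m.unop) : (n, m.unop) ⟶ (n', m.unop)))
  naturality {m m'} f := by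
    show X.map _ ≫ X.map _ = X.map _ ≫ X.map _
    rw [← X.map_comp, ← X.map_comp, ← op_comp, ← op_comp]
    congr 2

/-- The map of spaces `X_n ⟶ Y_n` induced by a map of simplicial spaces. -/
@[simps]
def lvlMap {X Y : sSp} (f : X ⟶ Y) (n : SimplexCategory) : lvl X n ⟶ lvl Y n where
  app _ := f.app _
  naturality _ _ _ := f.naturality _


/-- A map of simplicial sets is a Kan fibration: RLP w.r.t. horn inclusions. -/
def KanFib {X Y : SSet} (f : X ⟶ Y) : Prop :=
  ∀ (n : ℕ) (i : Fin (n + 2)), HasLiftingProperty (Λ[n + 1, i].ι) f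

/-- Trivial fibration of simplicial sets: RLP w.r.t. boundary inclusions. -/
def TrivFib {X Y : SSet} (f : X ⟶ Y) : Prop :=
  ∀ (n : ℕ), HasLiftingProperty (∂Δ[n].ι) f

/-- Anodyne maps (trivial cofibrations of the Kan–Quillen model structure). -/
def Anodyne {A B : SSet} (i : A ⟶ B) : Prop :=
  ∀ ⦃X Y : SSet⦄ (p : X ⟶ Y), KanFib p → HasLiftingProperty i p

/-- Weak homotopy equivalences of simplicial sets: maps factoring as an anodyne
map followed by a trivial fibration. -/
def WeakEquiv {X Y : SSet} (f : X ⟶ Y) : Prop :=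
  ∃ (Z : SSet) (i : X ⟶ Z) (p : Z ⟶ Y), Anodyne i ∧ TrivFib p ∧ i ≫ p = f

/-- Weak equivalences of simplicial spaces (Reedy = levelwise). -/
def sWE {X Y : sSp} (f : X ⟶ Y) : Prop :=
  ∀ n : SimplexCategory, WeakEquiv (lvlMap f n)

/-- Cofibrations of simplicial spaces: levelwise monomorphisms. -/
def sCof {X Y : sSp} (f : X ⟶ Y) : Prop :=
  ∀ n : SimplexCategory, Mono (lvlMap f n)

/-- Reedy fibrations of simplicial spaces, characterized by the right lifting
property against all trivial cofibrations. -/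
def sFib {X Y : sSp} (f : X ⟶ Y) : Prop :=
  ∀ ⦃A B : sSp⦄ (i : A ⟶ B), sCof i → sWE i → HasLiftingProperty i f

/-- Reedy trivial fibrations: RLP against all cofibrations. -/
def sTrivFib {X Y : sSp} (f : X ⟶ Y) : Prop :=
  ∀ ⦃A B : sSp⦄ (i : A ⟶ B), sCof i → HasLiftingProperty i f

/-- The discrete simplicial space `F[n]` (the "categorical" `n`-simplex). -/
@[simps]
def F (n : ℕ) : sSp where
  obj p := p.unop.1 ⟶ ⦋n⦌
  map f := TypeCat.ofHom fun g => f.unop.1 ≫ g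

/-- The "space-direction" simplex `Δ[m]` viewed as a simplicial space
(constant in the first variable). -/
@[simps]
def D (m : ℕ) : sSp where
  obj p := p.unop.2 ⟶ ⦋m⦌
  map f := TypeCat.ofHom fun g => f.unop.2 ≫ g

instance homToZeroSubsingleton (a : SimplexCategory) :
    Subsingleton (a ⟶ (⦋0⦌ : SimplexCategory)) :=
  ⟨fun f g => by
    apply SimplexCategory.Hom.ext'
    apply OrderHom.ext
    funext x
    apply Fin.ext
    have h1 : ((f.toOrderHom x : Fin (⦋0⦌.len + 1)) : ℕ) < 0 + 1 := by
      simpa using (f.toOrderHom x).isLt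
    have h2 : ((g.toOrderHom x : Fin (⦋0⦌.len + 1)) : ℕ) < 0 + 1 := by
      simpa using (g.toOrderHom x).isLt
    omega⟩

instance (p : (SimplexCategory × SimplexCategory)ᵒᵖ) : Subsingleton ((F 0).obj p) :=
  inferInstanceAs (Subsingleton (p.unop.1 ⟶ ⦋0⦌))

instance (p : (SimplexCategory × SimplexCategory)ᵒᵖ) : Subsingleton ((D 0).obj p) :=
  inferInstanceAs (Subsingleton (p.unop.2 ⟶ ⦋0⦌))

/-- `F[0]` is a terminal simplicial space. -/
noncomputable def FZeroIsTerminal : IsTerminal (F 0) :=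
  IsTerminal.ofUniqueHom
    (fun X => { app := fun p => TypeCat.ofHom fun _ => SimplexCategory.const p.unop.1 ⦋0⦌ 0
                naturality := fun _ _ _ => by ext; apply Subsingleton.elim })
    (fun X m => by
      ext p x
      apply Subsingleton.elim)

/-- `D[0]` is a terminal simplicial space. -/
noncomputable def DZeroIsTerminal : IsTerminal (D 0) :=
  IsTerminal.ofUniqueHom
    (fun X => { app := fun p => TypeCat.ofHom fun _ => SimplexCategory.const p.unop.2 ⦋0⦌ 0
                naturality := fun _ _ _ => by ext; apply Subsingleton.elim })
    (fun X m => by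
      ext p x
      apply Subsingleton.elim)

/-- Endpoint maps `D[0] ⟶ D[1]` (`i = 0, 1`). -/
def dVtx (i : Fin 2) : D 0 ⟶ D 1 where
  app p := TypeCat.ofHom fun g => g ≫ SimplexCategory.δ i.rev
  naturality _ _ _ := by ext; exact Category.assoc _ _ _

/-- Endpoint inclusions `X ⟶ X ⊗ D[1]` of the cylinder on a simplicial space. -/
noncomputable def cylIncl (i : Fin 2) (X : sSp) : X ⟶ X ⊗ D 1 :=
  CartesianMonoidalCategory.lift (𝟙 X) (DZeroIsTerminal.from X ≫ dVtx i)

/-- Maps `K ⟶ X` over `Z`. -/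
def HomOver {K X Z : sSp} (pK : K ⟶ Z) (pX : X ⟶ Z) : Type :=
  { u : K ⟶ X // u ≫ pX = pK }

/-- Two maps over `Z` are (elementarily) homotopic over `Z` if they are joined
by a fiberwise homotopy with cylinder `K ⊗ D[1]`; i.e., they are joined by an
edge in the mapping space `Map_Z(K, X)`. -/
def HtpyOver {K X Z : sSp} (pK : K ⟶ Z) (pX : X ⟶ Z)
    (u v : HomOver pK pX) : Prop :=
  ∃ h : K ⊗ D 1 ⟶ X,
    h ≫ pX = CartesianMonoidalCategory.fst K (D 1) ≫ pK ∧
    cylIncl 0 K ≫ h = u.1 ∧ cylIncl 1 K ≫ h = v.1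

/-- `π₀` of the mapping space `Map_Z(K, X)`: maps over `Z` up to homotopy
over `Z` (`Quot` takes the equivalence closure of the edge relation, which is
exactly the set of connected components). -/
def pi0MapOver {K X Z : sSp} (pK : K ⟶ Z) (pX : X ⟶ Z) : Type :=
  Quot (HtpyOver pK pX)

/-- `f : X ⟶ Y` over `Z` is a homotopy equivalence over `Z`. -/
noncomputable def HtpyEquivOver {X Y Z : sSp} (pX : X ⟶ Z) (pY : Y ⟶ Z)
    (f : X ⟶ Y) (hf : f ≫ pY = pX) : Prop :=
  ∃ (g : Y ⟶ X) (hg : g ≫ pX = pY),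
    Quot.mk (HtpyOver pX pX) ⟨f ≫ g, by rw [Category.assoc, hg, hf]⟩ =
      Quot.mk (HtpyOver pX pX) ⟨𝟙 X, by simp⟩ ∧
    Quot.mk (HtpyOver pY pY) ⟨g ≫ f, by rw [Category.assoc, hf, hg]⟩ =
      Quot.mk (HtpyOver pY pY) ⟨𝟙 Y, by simp⟩



lemma lmap_lmap (X : sSp) {n n' n'' : SimplexCategory} (a : n' ⟶ n'') (b : n ⟶ n') :
    lmap X a ≫ lmap X b = lmap X (b ≫ a) := by
  apply NatTrans.ext
  funext p
  show X.map _ ≫ X.map _ = X.map _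
  rw [← X.map_comp, ← op_comp, prod_comp, Category.comp_id]

/-- The source (initial vertex) map `X₁ ⟶ X₀`. -/
noncomputable def srcMap (X : sSp) : lvl X ⦋1⦌ ⟶ lvl X ⦋0⦌ :=
  lmap X (SimplexCategory.const ⦋0⦌ ⦋1⦌ 0)

/-- The target (final vertex) map `X₁ ⟶ X₀`. -/
noncomputable def tgtMap (X : sSp) : lvl X ⦋1⦌ ⟶ lvl X ⦋0⦌ :=
  lmap X (SimplexCategory.const ⦋0⦌ ⦋1⦌ 1)

/-- The iterated fiber product `X₁ ×_{X₀} ⋯ ×_{X₀} X₁` (with `k + 1` factors),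
together with its "final vertex" map to `X₀`. -/
noncomputable def chain (X : sSp) : (k : ℕ) → Σ' (S : SSet), S ⟶ lvl X ⦋0⦌ := fun k => match k with
  | 0 => ⟨lvl X ⦋1⦌, tgtMap X⟩
  | k + 1 => ⟨pullback (chain X k).2 (srcMap X),
      pullback.snd (chain X k).2 (srcMap X) ≫ tgtMap X⟩

/-- The Segal map `φ_{k+1} : X_{k+1} ⟶ X₁ ×_{X₀} ⋯ ×_{X₀} X₁`, together with
its compatibility with the final vertex maps. -/
noncomputable def segalMapAux (X : sSp) :
    (k : ℕ) → { φ : lvl X ⦋k + 1⦌ ⟶ (chain X k).1 //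
      φ ≫ (chain X k).2 =
        lmap X (SimplexCategory.const ⦋0⦌ ⦋k + 1⦌ (Fin.last (k + 1))) } := fun k => match k with
  | 0 => ⟨𝟙 _, by
      show 𝟙 _ ≫ tgtMap X = _
      rw [Category.id_comp]
      rfl⟩
  | k + 1 => by
    refine ⟨pullback.lift
      (lmap X (SimplexCategory.δ (Fin.last (k + 2))) ≫ (segalMapAux X k).1)
      (lmap X (SimplexCategory.mkOfSucc (Fin.last (k + 1))))
      ?_, ?_⟩
    · rw [Category.assoc, (segalMapAux X k).2, lmap_lmap]
      unfold srcMap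
      rw [lmap_lmap]
      congr 1
      apply SimplexCategory.Hom.ext_zero_left
      simp [SimplexCategory.comp_toOrderHom, SimplexCategory.δ, Fin.succAbove_last,
        SimplexCategory.mkOfSucc_homToOrderHom_zero]
    · show pullback.lift _ _ _ ≫ (pullback.snd (chain X k).2 (srcMap X) ≫ tgtMap X) = _
      rw [pullback.lift_snd_assoc]
      unfold tgtMap
      rw [lmap_lmap]
      congr 1

/-- The Segal map `X_n ⟶ X₁ ×_{X₀} ⋯ ×_{X₀} X₁` (`n = k + 1 ≥ 1`). -/
noncomputable def segalMap (X : sSp) (k : ℕ) : lvl X ⦋k + 1⦌ ⟶ (chain X k).1 :=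
  (segalMapAux X k).1

/-- A Segal space: a Reedy fibrant simplicial space whose Segal maps
`X_n ⟶ X₁ ×_{X₀} ⋯ ×_{X₀} X₁` are weak equivalences. -/
noncomputable def IsSegal (X : sSp) : Prop :=
  sFib (FZeroIsTerminal.from X) ∧ ∀ k : ℕ, WeakEquiv (segalMap X k)


/-- The map `F[n] ⟶ F[m]` induced by `a : [n] ⟶ [m]`. -/
def FHom {n m : ℕ} (a : (⦋n⦌ : SimplexCategory) ⟶ ⦋m⦌) : F n ⟶ F m where
  app p := TypeCat.ofHom fun g => g ≫ a
  naturality _ _ _ := by ext; exact Category.assoc _ _ _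

/-- The inclusion `δ⁰ : F[0] ⟶ F[1]` of the initial vertex. -/
def e01 : F 0 ⟶ F 1 := FHom (SimplexCategory.δ 1)

/-- The inclusion `δ⁰ : F[0] ⟶ F[n]` of the initial vertex. -/
def e0F (n : ℕ) : F 0 ⟶ F n := FHom (SimplexCategory.const ⦋0⦌ ⦋n⦌ 0)

/-- For `i : A ⟶ B` and `p : X ⟶ Y`, the induced map
`X^B ⟶ X^A ×_{Y^A} Y^B`. -/
noncomputable def expComparison' {A B X Y : sSp} (i : A ⟶ B) (p : X ⟶ Y) :
    (B ⟹ X) ⟶ pullback ((ihom A).map p) ((MonoidalClosed.pre i).app Y) :=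
  pullback.lift ((MonoidalClosed.pre i).app X) ((ihom B).map p) ((MonoidalClosed.pre i).naturality p).symm

/-- A left fibration is a Reedy fibration `f : X ⟶ Y` such that the induced
map `X^{F[1]} ⟶ X^{F[0]} ×_{Y^{F[0]}} Y^{F[1]}` (note `F[0]` is terminal, so
`X^{F[0]} ≅ X`) is a trivial fibration. -/
noncomputable def LeftFib {X Y : sSp} (f : X ⟶ Y) : Prop :=
  sFib f ∧ sTrivFib (expComparison' e01 f)




/-- The inclusion of the final vertex `F[0] ⟶ F[1]`. -/
def e1F : F 0 ⟶ F 1 := FHom (SimplexCategory.δ 0)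

/-- The canonical map `X^{F[0]} ⟶ X` (evaluation; an isomorphism since `F[0]`
is terminal). -/
noncomputable def unpt (X : sSp) : ((F 0) ⟹ X) ⟶ X :=
  CartesianMonoidalCategory.lift (FZeroIsTerminal.from _) (𝟙 _) ≫ ((ihom.ev (F 0)).app X)

/-- Evaluation of `X^{F[1]}` at the initial vertex, `X^{F[1]} ⟶ X`. -/
noncomputable def ev0X (X : sSp) : ((F 1) ⟹ X) ⟶ X :=
  (MonoidalClosed.pre e01).app X ≫ unpt X

/-- Evaluation of `X^{F[1]}` at the final vertex, `X^{F[1]} ⟶ X`. -/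
noncomputable def ev1X (X : sSp) : ((F 1) ⟹ X) ⟶ X :=
  (MonoidalClosed.pre e1F).app X ≫ unpt X

/-- The undercategory `x\X := {x} ×_X X^{F[1]}` (fiber over the initial
vertex evaluation). -/
noncomputable def underCat {X : sSp} (x : F 0 ⟶ X) : sSp :=
  pullback (ev0X X) x

/-- The projection `x\X ⟶ X`, evaluation at the final vertex. -/
noncomputable def underProj {X : sSp} (x : F 0 ⟶ X) : underCat x ⟶ X :=
  pullback.fst (ev0X X) x ≫ ev1X X

/-- The identity edge at `x`, as a point of `x\X` (the constant edge at `x`). -/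
noncomputable def idEdge {X : sSp} (x : F 0 ⟶ X) : F 0 ⟶ underCat x :=
  pullback.lift (MonoidalClosed.curry (CartesianMonoidalCategory.snd (F 1) (F 0) ≫ x))
    (𝟙 (F 0))
    (by
      unfold ev0X unpt
      rw [Category.id_comp]
      have key : ∀ m : F 0 ⟶ ((F 0) ⟹ X),
          m ≫ (CartesianMonoidalCategory.lift (FZeroIsTerminal.from ((F 0) ⟹ X)) (𝟙 _) ≫
            (ihom.ev (F 0)).app X) =
          CartesianMonoidalCategory.lift (FZeroIsTerminal.from (F 0)) (𝟙 (F 0)) ≫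
            MonoidalClosed.uncurry m := by
        intro m
        rw [MonoidalClosed.uncurry_eq]
        rw [← Category.assoc, ← Category.assoc]
        congr 1
      rw [← Category.assoc, key]
      rw [MonoidalClosed.uncurry_natural_left, MonoidalClosed.uncurry_pre]
      rw [← Category.assoc ((F 0) ◁ _), whisker_exchange]
      rw [Category.assoc, ← MonoidalClosed.uncurry_eq, MonoidalClosed.uncurry_curry,
        CartesianMonoidalCategory.whiskerRight_snd_assoc,
        CartesianMonoidalCategory.lift_snd_assoc, Category.id_comp])


/-- The simplex `Δ[c]` in the space direction, as a simplicial space. -/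
@[simps]
def Dc (c : SimplexCategory) : sSp where
  obj p := p.unop.2 ⟶ c
  map f := TypeCat.ofHom fun g => f.unop.2 ≫ g

/-- Functoriality of `Dc`. -/
def DcHom {c c' : SimplexCategory} (a : c ⟶ c') : Dc c ⟶ Dc c' where
  app p := TypeCat.ofHom fun g => g ≫ a
  naturality _ _ _ := by ext; exact Category.assoc _ _ _

lemma DcHom_id (c : SimplexCategory) : DcHom (𝟙 c) = 𝟙 (Dc c) := by
  ext p g
  exact Category.comp_id g

lemma DcHom_comp {c c' c'' : SimplexCategory} (a : c ⟶ c') (b : c' ⟶ c'') :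
    DcHom (a ≫ b) = DcHom a ≫ DcHom b := by
  ext p g
  exact (Category.assoc g a b).symm

/-- The mapping space `Map_Z(A, E)` of maps over `Z`: its `m`-simplices are
the maps `A ⊗ Δ[m] ⟶ E` over `Z`. -/
noncomputable def MapOver (Z A E : sSp) (pA : A ⟶ Z) (pE : E ⟶ Z) : SSet where
  obj mo := { u : (MonoidalCategory.tensorObj A (Dc mo.unop)) ⟶ E //
    u ≫ pE = CartesianMonoidalCategory.fst A (Dc mo.unop) ≫ pA }
  map {mo mo'} f := TypeCat.ofHom fun u => ⟨(A ◁ DcHom f.unop) ≫ u.1, by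
    rw [Category.assoc, u.2]
    simp⟩
  map_id mo := by
    refine ConcreteCategory.hom_ext _ _ fun u => ?_
    apply Subtype.ext
    show (A ◁ DcHom (𝟙 mo).unop) ≫ u.1 = u.1
    rw [show ((𝟙 mo).unop) = 𝟙 mo.unop from rfl, DcHom_id]
    simp
  map_comp {mo mo' mo''} f g := by
    refine ConcreteCategory.hom_ext _ _ fun u => ?_
    apply Subtype.ext
    show (A ◁ DcHom (f ≫ g).unop) ≫ u.1 = (A ◁ DcHom g.unop) ≫ (A ◁ DcHom f.unop) ≫ u.1
    rw [show ((f ≫ g).unop) = g.unop ≫ f.unop from rfl, DcHom_comp,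
      MonoidalCategory.whiskerLeft_comp]
    simp

/-- Precomposition `Map_Z(A, E) ⟶ Map_Z(A', E)` along `g : A' ⟶ A` over `Z`. -/
noncomputable def MapOverPrecomp {Z A A' E : sSp} (pA : A ⟶ Z) (pE : E ⟶ Z)
    (g : A' ⟶ A) :
    MapOver Z A E pA pE ⟶ MapOver Z A' E (g ≫ pA) pE where
  app mo := TypeCat.ofHom fun u => ⟨(g ▷ Dc mo.unop) ≫ u.1, by
    rw [Category.assoc, u.2]
    simp⟩
  naturality {mo mo'} f := by
    refine ConcreteCategory.hom_ext _ _ fun u => ?_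
    apply Subtype.ext
    show (g ▷ Dc mo'.unop) ≫ (A ◁ DcHom f.unop) ≫ u.1 =
      (A' ◁ DcHom f.unop) ≫ (g ▷ Dc mo.unop) ≫ u.1
    rw [← Category.assoc, ← Category.assoc, whisker_exchange]

section Exponential

open CartesianMonoidalCategory MonoidalClosed

lemma comp_unpt {X W : sSp} (m : W ⟶ (F 0 ⟹ X)) :
    m ≫ unpt X = lift (FZeroIsTerminal.from W) (𝟙 W) ≫ uncurry m := by
  rw [uncurry_eq, unpt, ← Category.assoc, ← Category.assoc]
  congr 1

lemma uncurry_comp_pre_app {A B X W : sSp} (i : A ⟶ B) (m : W ⟶ (B ⟹ X)) :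
    uncurry (m ≫ (pre i).app X) = (i ▷ W) ≫ uncurry m := by
  rw [uncurry_natural_left, uncurry_pre, ← Category.assoc, whisker_exchange,
    Category.assoc, ← uncurry_eq]

lemma uncurry_eq_snd_comp_unpt {X W : sSp} (m : W ⟶ (F 0 ⟹ X)) :
    uncurry m = snd (F 0) W ≫ m ≫ unpt X := by
  rw [comp_unpt, ← Category.assoc,
    show snd (F 0) W ≫ lift (FZeroIsTerminal.from W) (𝟙 W) = 𝟙 _ from
      hom_ext _ _ (FZeroIsTerminal.hom_ext _ _) (by simp), Category.id_comp]

noncomputable def insertVertex (v : F 0 ⟶ F 1) (W : sSp) : W ⟶ F 1 ⊗ W :=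
  lift (FZeroIsTerminal.from W ≫ v) (𝟙 W)

lemma insertVertex_naturality {S T : sSp} (v : F 0 ⟶ F 1) (f : S ⟶ T) :
    f ≫ insertVertex v T = insertVertex v S ≫ (F 1 ◁ f) :=
  hom_ext _ _ (by simp [insertVertex, ← Category.assoc])
    (by simp [insertVertex])

lemma comp_pre_app_unpt {X W : sSp} (v : F 0 ⟶ F 1) (m : W ⟶ (F 1 ⟹ X)) :
    m ≫ (pre v).app X ≫ unpt X = insertVertex v W ≫ uncurry m := by
  rw [← Category.assoc, comp_unpt, uncurry_comp_pre_app, ← Category.assoc]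
  rfl

/-- Lifting the pushout-product of `i` and `c` against `π`, in uncurried form. -/
lemma exists_lift_of_sTrivFib_expComparison' {A B E X : sSp} {i : A ⟶ B} {π : E ⟶ X}
    (hπ : sTrivFib (expComparison' i π)) {S T : sSp} {c : S ⟶ T} (hc : sCof c)
    (top : B ⊗ S ⟶ E) (side : A ⊗ T ⟶ E) (bot : B ⊗ T ⟶ X)
    (htop : top ≫ π = (B ◁ c) ≫ bot) (hside : side ≫ π = (i ▷ T) ≫ bot)
    (hcompat : (A ◁ c) ≫ side = (i ▷ S) ≫ top) :
    ∃ L : B ⊗ T ⟶ E, (B ◁ c) ≫ L = top ∧ (i ▷ T) ≫ L = side ∧ L ≫ π = bot := by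
  have hw : curry side ≫ (ihom A).map π = curry bot ≫ (pre i).app X := by
    rw [← curry_natural_right, hside]
    apply uncurry_injective
    rw [uncurry_curry, uncurry_comp_pre_app, uncurry_curry]
  have sq : CommSq (curry top) c (expComparison' i π) (pullback.lift _ _ hw) := by
    constructor
    apply pullback.hom_ext
    · rw [Category.assoc, Category.assoc, expComparison', pullback.lift_fst, pullback.lift_fst]
      apply uncurry_injective
      rw [uncurry_comp_pre_app, uncurry_curry, uncurry_natural_left, uncurry_curry, hcompat]
    · rw [Category.assoc, Category.assoc, expComparison', pullback.lift_snd, pullback.lift_snd,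
        ← curry_natural_right, htop, curry_natural_left]
  have := hπ c hc
  have hfst : sq.lift ≫ (pre i).app E = curry side := by
    have := congrArg (· ≫ pullback.fst _ _) sq.fac_right
    simpa only [Category.assoc, expComparison', pullback.lift_fst] using this
  have hsnd : sq.lift ≫ (ihom B).map π = curry bot := by
    have := congrArg (· ≫ pullback.snd _ _) sq.fac_right
    simpa only [Category.assoc, expComparison', pullback.lift_snd] using this
  refine ⟨uncurry sq.lift, ?_, ?_, ?_⟩
  · rw [← uncurry_natural_left, sq.fac_left, uncurry_curry]
  · rw [← uncurry_comp_pre_app, hfst, uncurry_curry]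
  · rw [← uncurry_natural_right, hsnd, uncurry_curry]

end Exponential

section Contraction

open CartesianMonoidalCategory

structure LeftContraction {U : sSp} (u : F 0 ⟶ U) where
  hom : F 1 ⊗ U ⟶ U
  hom_zero : (e01 ▷ U) ≫ hom = fst (F 0) U ≫ u
  hom_one : insertVertex e1F U ≫ hom = 𝟙 U
  hom_point : (F 1 ◁ u) ≫ hom = snd (F 1) (F 0) ≫ u

lemma mk_inf_comp_δ_one {a : SimplexCategory} (c : a ⟶ ⦋0⦌) (t : a ⟶ ⦋1⦌) :
    SimplexCategory.Hom.mk (t.toOrderHom ⊓ (c ≫ SimplexCategory.δ 1).toOrderHom) =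
      c ≫ SimplexCategory.δ 1 := by
  apply SimplexCategory.Hom.ext
  ext i : 2
  simp [SimplexCategory.δ, show c.toOrderHom i = 0 from Fin.fin_one_eq_zero _]

lemma mk_inf_comp_δ_zero {a : SimplexCategory} (c : a ⟶ ⦋0⦌) (t : a ⟶ ⦋1⦌) :
    SimplexCategory.Hom.mk (t.toOrderHom ⊓ (c ≫ SimplexCategory.δ 0).toOrderHom) = t := by
  apply SimplexCategory.Hom.ext
  ext i : 2
  simp [SimplexCategory.δ, show c.toOrderHom i = 0 from Fin.fin_one_eq_zero _]
  exact Fin.le_last _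

def minReparam (W : sSp) : F 1 ⊗ (F 1 ⊗ W) ⟶ F 1 ⊗ W where
  app _ := TypeCat.ofHom fun y =>
    (SimplexCategory.Hom.mk (y.1.toOrderHom ⊓ y.2.1.toOrderHom), y.2.2)

lemma insertVertex_e01_minReparam (W : sSp) :
    insertVertex e01 (F 1 ⊗ W) ≫ minReparam W = snd (F 1) W ≫ insertVertex e01 W := by
  apply NatTrans.ext; funext p; ext ⟨s, w⟩
  exact Prod.ext
    ((congrArg SimplexCategory.Hom.mk (inf_comm _ _)).trans (mk_inf_comp_δ_one _ s)) rfl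

lemma whiskerLeft_e01_minReparam (W : sSp) :
    (F 1 ◁ (e01 ▷ W)) ≫ minReparam W = snd (F 1) (F 0 ⊗ W) ≫ (e01 ▷ W) := by
  apply NatTrans.ext; funext p; ext ⟨t, c, w⟩
  exact Prod.ext (mk_inf_comp_δ_one c t) rfl

lemma whiskerLeft_insertVertex_e1F_minReparam (W : sSp) :
    (F 1 ◁ insertVertex e1F W) ≫ minReparam W = 𝟙 (F 1 ⊗ W) := by
  apply NatTrans.ext; funext p; ext ⟨t, w⟩
  exact Prod.ext (mk_inf_comp_δ_zero _ t) rfl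

end Contraction

section UnderCat

open CartesianMonoidalCategory MonoidalClosed

variable {X : sSp} (x : F 0 ⟶ X)

noncomputable def underPath : underCat x ⟶ (F 1 ⟹ X) :=
  pullback.fst (ev0X X) x

lemma comp_ev0X {W : sSp} (m : W ⟶ (F 1 ⟹ X)) :
    m ≫ ev0X X = insertVertex e01 W ≫ uncurry m :=
  comp_pre_app_unpt e01 m

lemma underPath_ev0X : underPath x ≫ ev0X X = FZeroIsTerminal.from _ ≫ x :=
  pullback.condition.trans (congrArg (· ≫ x) (FZeroIsTerminal.hom_ext _ _))

lemma idEdge_underPath : idEdge x ≫ underPath x = curry (snd (F 1) (F 0) ≫ x) :=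
  pullback.lift_fst _ _ _

lemma underCat_hom_ext {W : sSp} {f g : W ⟶ underCat x}
    (h : f ≫ underPath x = g ≫ underPath x) : f = g :=
  pullback.hom_ext h (FZeroIsTerminal.hom_ext _ _)

noncomputable def underCatLift {W : sSp} (m : W ⟶ (F 1 ⟹ X))
    (hm : m ≫ ev0X X = FZeroIsTerminal.from W ≫ x) : W ⟶ underCat x :=
  pullback.lift m (FZeroIsTerminal.from W) hm

lemma underCatLift_underPath {W : sSp} (m : W ⟶ (F 1 ⟹ X))
    (hm : m ≫ ev0X X = FZeroIsTerminal.from W ≫ x) : underCatLift x m hm ≫ underPath x = m :=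
  pullback.lift_fst _ _ _

lemma whiskerRight_e01_uncurry_underPath :
    (e01 ▷ underCat x) ≫ uncurry (underPath x) = fst (F 0) (underCat x) ≫ x := by
  rw [← uncurry_comp_pre_app, uncurry_eq_snd_comp_unpt, Category.assoc, ← ev0X, underPath_ev0X,
    ← Category.assoc]
  exact congrArg (· ≫ x) (FZeroIsTerminal.hom_ext _ _)

lemma curry_minReparam_ev0X :
    curry (minReparam _ ≫ uncurry (underPath x)) ≫ ev0X X =
      FZeroIsTerminal.from (F 1 ⊗ underCat x) ≫ x := by
  rw [comp_ev0X, uncurry_curry, ← Category.assoc, insertVertex_e01_minReparam,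
    Category.assoc, ← comp_ev0X, underPath_ev0X, ← Category.assoc]
  congr 1

noncomputable def underCatContraction : LeftContraction (idEdge x) where
  hom := underCatLift x _ (curry_minReparam_ev0X x)
  hom_zero := by
    apply underCat_hom_ext
    rw [Category.assoc, Category.assoc, underCatLift_underPath, idEdge_underPath]
    apply uncurry_injective
    rw [uncurry_natural_left, uncurry_curry, uncurry_natural_left, uncurry_curry,
      ← Category.assoc, whiskerLeft_e01_minReparam, Category.assoc,
      whiskerRight_e01_uncurry_underPath]
    rfl
  hom_one := by
    apply underCat_hom_ext
    rw [Category.assoc, underCatLift_underPath, Category.id_comp]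
    apply uncurry_injective
    rw [uncurry_natural_left, uncurry_curry, ← Category.assoc,
      whiskerLeft_insertVertex_e1F_minReparam, Category.id_comp]
  hom_point := by
    apply underCat_hom_ext
    rw [Category.assoc, Category.assoc, underCatLift_underPath, idEdge_underPath]
    apply uncurry_injective
    rw [uncurry_natural_left, uncurry_curry, uncurry_natural_left, uncurry_curry]
    have : (F 1 ◁ (F 1 ◁ idEdge x)) ≫ minReparam (underCat x) =
        minReparam (F 0) ≫ (F 1 ◁ idEdge x) := rfl
    rw [← Category.assoc, this, Category.assoc, ← uncurry_natural_left, idEdge_underPath,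
      uncurry_curry]
    rfl

end UnderCat

section Extension

open CartesianMonoidalCategory

variable {E X : sSp} {π : E ⟶ X}

lemma sCof_of_mono {S T : sSp} (j : S ⟶ T) [Mono j] : sCof j := fun n =>
  have : ∀ m, Mono ((lvlMap j n).app m) := fun _ => (inferInstance : Mono (j.app _))
  NatTrans.mono_of_mono_app _

/-- Via `H`, the map `j` is a retract of the pushout-product of `e01` and `j`, and `insertVertex`
at the final vertex turns a lift against the latter into an extension along `j`. -/
lemma exists_extension_of_deformation (hπ : sTrivFib (expComparison' e01 π))
    {S T : sSp} (j : S ⟶ T) [Mono j] (H : F 1 ⊗ T ⟶ T)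
    (HS : F 1 ⊗ S ⟶ S) (hHS : HS ≫ j = (F 1 ◁ j) ≫ H)
    (H₀ : F 0 ⊗ T ⟶ S) (hH₀ : H₀ ≫ j = (e01 ▷ T) ≫ H)
    (hH₁ : insertVertex e1F T ≫ H = 𝟙 T)
    (pT : T ⟶ X) (a : S ⟶ E) (ha : a ≫ π = j ≫ pT) :
    ∃ ℓ : T ⟶ E, j ≫ ℓ = a ∧ ℓ ≫ π = pT := by
  have hcompat : (F 0 ◁ j) ≫ H₀ ≫ a = (e01 ▷ S) ≫ HS ≫ a := by
    simp only [← Category.assoc]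
    congr 1
    rw [← cancel_mono j, Category.assoc, Category.assoc, hH₀, hHS, ← Category.assoc,
      whisker_exchange, Category.assoc]
  obtain ⟨L, hLS, -, hLπ⟩ := exists_lift_of_sTrivFib_expComparison' hπ (sCof_of_mono j)
    (HS ≫ a) (H₀ ≫ a) (H ≫ pT)
    (by rw [Category.assoc, ha, ← Category.assoc, hHS, Category.assoc])
    (by rw [Category.assoc, ha, ← Category.assoc, hH₀, Category.assoc]) hcompat
  have hHS₁ : insertVertex e1F S ≫ HS = 𝟙 S := by
    rw [← cancel_mono j, Category.assoc, hHS, ← Category.assoc, ← insertVertex_naturality,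
      Category.assoc, hH₁, Category.comp_id, Category.id_comp]
  refine ⟨insertVertex e1F T ≫ L, ?_, ?_⟩
  · rw [← Category.assoc, insertVertex_naturality, Category.assoc, hLS, ← Category.assoc, hHS₁,
      Category.id_comp]
  · rw [Category.assoc, hLπ, ← Category.assoc, hH₁, Category.id_comp]

variable {U : sSp}

/-- The subobject `U ⊗ ∂Δ[n] ∪ {u} ⊗ Δ[n]` of `U ⊗ Δ[n]`. -/
def relBoundary (u : F 0 ⟶ U) (n : ℕ) : Subfunctor (U ⊗ Dc ⦋n⦌) where
  obj q := {y | ¬ Function.Surjective y.2.toOrderHom ∨ y.1 ∈ Set.range (u.app q)}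
  map {q q'} φ y hy := by
    rcases hy with hs | ⟨w, hw⟩
    · exact Or.inl fun h => hs (Function.Surjective.of_comp h)
    · exact Or.inr ⟨(F 0).map φ w,
        (types_congr_hom (u.naturality φ) w).trans (congrArg (U.map φ) hw)⟩

variable {u : F 0 ⟶ U}

/-- The contraction of `U` onto `u`, run along `Δ[n]`, is a deformation as in
`exists_extension_of_deformation`. -/
theorem LeftContraction.exists_extension (c : LeftContraction u)
    (hπ : sTrivFib (expComparison' e01 π)) (pU : U ⟶ X) (n : ℕ)
    (a : (relBoundary u n).toFunctor ⟶ E)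
    (ha : a ≫ π = (relBoundary u n).ι ≫ fst U (Dc ⦋n⦌) ≫ pU) :
    ∃ ℓ : U ⊗ Dc ⦋n⦌ ⟶ E, (relBoundary u n).ι ≫ ℓ = a ∧ ℓ ≫ π = fst U (Dc ⦋n⦌) ≫ pU := by
  let H : F 1 ⊗ (U ⊗ Dc ⦋n⦌) ⟶ U ⊗ Dc ⦋n⦌ := (α_ _ _ _).inv ≫ (c.hom ▷ Dc ⦋n⦌)
  have hS : Subfunctor.range ((F 1 ◁ (relBoundary u n).ι) ≫ H) ≤ relBoundary u n := by
    rintro q _ ⟨⟨t, y, hy⟩, rfl⟩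
    rcases hy with hs | ⟨w, hw⟩
    · exact Or.inl hs
    · refine Or.inr ⟨w, ?_⟩
      change u.app q w = c.hom.app q (t, y.1)
      rw [← hw]
      exact (types_congr_hom (NatTrans.congr_app c.hom_point q) (t, w)).symm
  have h₀ : Subfunctor.range ((e01 ▷ (U ⊗ Dc ⦋n⦌)) ≫ H) ≤ relBoundary u n := by
    rintro q _ ⟨⟨w, y⟩, rfl⟩
    exact Or.inr ⟨w, (types_congr_hom (NatTrans.congr_app c.hom_zero q) (w, y.1)).symm⟩
  refine exists_extension_of_deformation hπ (relBoundary u n).ι H (Subfunctor.lift _ hS) rfl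
    (Subfunctor.lift _ h₀) rfl ?_ _ a ha
  apply NatTrans.ext; funext q; ext ⟨y, s⟩
  exact Prod.ext (types_congr_hom (NatTrans.congr_app c.hom_one q) y) rfl

end Extension

section MapOverEval

open CartesianMonoidalCategory

variable {Z A E : sSp} {pA : A ⟶ Z} {pE : E ⟶ Z} {K : SSet}

/-- The map `A ⊗ K ⟶ E` adjoint to a family `K ⟶ Map_Z(A, E)`, evaluated at `(a, k)`. -/
noncomputable def MapOver.eval (φ : K ⟶ MapOver Z A E pA pE)
    (q : (SimplexCategory × SimplexCategory)ᵒᵖ) (a : A.obj q) (k : K.obj (.op q.unop.2)) :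
    E.obj q :=
  (φ.app _ k).1.app q (a, 𝟙 q.unop.2)

lemma MapOver.app_apply_eq_eval (φ : K ⟶ MapOver Z A E pA pE) {m : SimplexCategoryᵒᵖ}
    (k : K.obj m) (q : (SimplexCategory × SimplexCategory)ᵒᵖ) (a : A.obj q)
    (t : q.unop.2 ⟶ m.unop) :
    (φ.app m k).1.app q (a, t) = MapOver.eval φ q a (K.map t.op k) :=
  (congrArg (fun s => (φ.app m k).1.app q (a, s)) (Category.id_comp t).symm).trans
    (types_congr_hom (congrArg (fun v => (Subtype.val v).app q)
      (types_congr_hom (φ.naturality t.op) k)) (a, 𝟙 _)).symm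

lemma MapOver.eval_naturality (φ : K ⟶ MapOver Z A E pA pE)
    {q q' : (SimplexCategory × SimplexCategory)ᵒᵖ} (ψ : q ⟶ q') (a : A.obj q)
    (k : K.obj (.op q.unop.2)) :
    MapOver.eval φ q' (A.map ψ a) (K.map ψ.unop.2.op k) = E.map ψ (MapOver.eval φ q a k) :=
  (MapOver.app_apply_eq_eval φ k q' (A.map ψ a) ψ.unop.2).symm.trans <|
    (congrArg (fun s => (φ.app _ k).1.app q' (A.map ψ a, s)) (Category.comp_id _).symm).trans
      (types_congr_hom ((φ.app _ k).1.naturality ψ) (a, 𝟙 _))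

lemma MapOver.eval_over (φ : K ⟶ MapOver Z A E pA pE)
    (q : (SimplexCategory × SimplexCategory)ᵒᵖ) (a : A.obj q) (k : K.obj (.op q.unop.2)) :
    pE.app q (MapOver.eval φ q a k) = pA.app q a :=
  types_congr_hom (NatTrans.congr_app (φ.app _ k).2 q) (a, 𝟙 _)

@[ext]
lemma MapOver.hom_ext {φ φ' : K ⟶ MapOver Z A E pA pE}
    (h : ∀ q a k, MapOver.eval φ q a k = MapOver.eval φ' q a k) : φ = φ' := by
  apply NatTrans.ext; funext m; ext k
  apply Subtype.ext
  apply NatTrans.ext; funext q; ext ⟨a, t⟩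
  exact (MapOver.app_apply_eq_eval φ k q a t).trans
    ((h q a _).trans (MapOver.app_apply_eq_eval φ' k q a t).symm)

noncomputable def MapOver.ofHom {c : SimplexCategory} (ℓ : A ⊗ Dc c ⟶ E)
    (hℓ : ℓ ≫ pE = fst A (Dc c) ≫ pA) : stdSimplex.obj c ⟶ MapOver Z A E pA pE where
  app m := TypeCat.ofHom fun s => ⟨(A ◁ DcHom (stdSimplex.objEquiv s)) ≫ ℓ, by
    rw [Category.assoc, hℓ, ← Category.assoc, whiskerLeft_fst]⟩
  naturality m m' ψ := by
    ext s
    apply Subtype.ext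
    change (A ◁ DcHom (ψ.unop ≫ stdSimplex.objEquiv s)) ≫ ℓ = _
    rw [DcHom_comp, MonoidalCategory.whiskerLeft_comp, Category.assoc]
    rfl

lemma MapOver.eval_ofHom {c : SimplexCategory} (ℓ : A ⊗ Dc c ⟶ E)
    (hℓ : ℓ ≫ pE = fst A (Dc c) ≫ pA) (q : (SimplexCategory × SimplexCategory)ᵒᵖ)
    (a : A.obj q) (k : (stdSimplex.obj c).obj (.op q.unop.2)) :
    MapOver.eval (MapOver.ofHom ℓ hℓ) q a k = ℓ.app q (a, stdSimplex.objEquiv k) := by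
  change ℓ.app q (a, 𝟙 _ ≫ _) = _
  rw [Category.id_comp]

end MapOverEval

section Gluing

open CartesianMonoidalCategory

variable {E X U : sSp} {π : E ⟶ X} {u : F 0 ⟶ U} {pU : U ⟶ X} {n : ℕ}
  {f : (∂Δ[n] : SSet) ⟶ MapOver X U E pU π} {g : Δ[n] ⟶ MapOver X (F 0) E (u ≫ pU) π}

lemma MapOver.eval_point_of_comm (w : f ≫ MapOverPrecomp pU π u = ∂Δ[n].ι ≫ g)
    (q : (SimplexCategory × SimplexCategory)ᵒᵖ) (z : (F 0).obj q)
    (k : (∂Δ[n] : SSet).obj (.op q.unop.2)) :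
    MapOver.eval f q (u.app q z) k = MapOver.eval g q z k.1 :=
  types_congr_hom (congrArg (fun v => (Subtype.val v).app q)
    (types_congr_hom (NatTrans.congr_app w _) k)) (z, 𝟙 _)

variable (f g) in
open scoped Classical in
/-- Pointwise gluing of the two sides of a lifting problem of `∂Δ[n] ⟶ Δ[n]` against
precomposition with `u`. -/
noncomputable def glueFun (q : (SimplexCategory × SimplexCategory)ᵒᵖ)
    (y : (relBoundary u n).toFunctor.obj q) : E.obj q :=
  if hs : Function.Surjective y.1.2.toOrderHom then
    MapOver.eval g q ((FZeroIsTerminal.from U).app q y.1.1) (stdSimplex.objEquiv.symm y.1.2)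
  else MapOver.eval f q y.1.1 ⟨stdSimplex.objEquiv.symm y.1.2, hs⟩

lemma glueFun_of_not_surjective (q : (SimplexCategory × SimplexCategory)ᵒᵖ)
    (y : (relBoundary u n).toFunctor.obj q) (hs : ¬ Function.Surjective y.1.2.toOrderHom) :
    glueFun f g q y = MapOver.eval f q y.1.1 ⟨stdSimplex.objEquiv.symm y.1.2, hs⟩ :=
  dif_neg hs

lemma glueFun_of_point (w : f ≫ MapOverPrecomp pU π u = ∂Δ[n].ι ≫ g)
    (q : (SimplexCategory × SimplexCategory)ᵒᵖ) (y : (relBoundary u n).toFunctor.obj q)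
    (z : (F 0).obj q) (hz : u.app q z = y.1.1) :
    glueFun f g q y = MapOver.eval g q z (stdSimplex.objEquiv.symm y.1.2) := by
  by_cases hs : Function.Surjective y.1.2.toOrderHom
  · rw [glueFun, dif_pos hs, Subsingleton.elim ((FZeroIsTerminal.from U).app q y.1.1) z]
  · rw [glueFun_of_not_surjective q y hs, ← hz]
    exact MapOver.eval_point_of_comm w q z _

lemma glueFun_naturality (w : f ≫ MapOverPrecomp pU π u = ∂Δ[n].ι ≫ g)
    {q q' : (SimplexCategory × SimplexCategory)ᵒᵖ} (ψ : q ⟶ q')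
    (y : (relBoundary u n).toFunctor.obj q) :
    glueFun f g q' ((relBoundary u n).toFunctor.map ψ y) = E.map ψ (glueFun f g q y) := by
  rcases y.2 with hs | ⟨z, hz⟩
  · rw [glueFun_of_not_surjective q y hs,
      glueFun_of_not_surjective q' ((relBoundary u n).toFunctor.map ψ y)
        fun h => hs (Function.Surjective.of_comp h)]
    exact MapOver.eval_naturality f ψ y.1.1 ⟨stdSimplex.objEquiv.symm y.1.2, hs⟩
  · have hz' : u.app q' ((F 0).map ψ z) = ((relBoundary u n).toFunctor.map ψ y).1.1 :=
      (types_congr_hom (u.naturality ψ) z).trans (congrArg (U.map ψ) hz)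
    rw [glueFun_of_point w q y z hz, glueFun_of_point w q' _ _ hz']
    exact MapOver.eval_naturality g ψ z (stdSimplex.objEquiv.symm y.1.2)

lemma glueFun_over (w : f ≫ MapOverPrecomp pU π u = ∂Δ[n].ι ≫ g)
    (q : (SimplexCategory × SimplexCategory)ᵒᵖ) (y : (relBoundary u n).toFunctor.obj q) :
    π.app q (glueFun f g q y) = pU.app q y.1.1 := by
  rcases y.2 with hs | ⟨z, hz⟩
  · rw [glueFun_of_not_surjective q y hs]
    exact MapOver.eval_over f q _ _
  · rw [glueFun_of_point w q y z hz, MapOver.eval_over g q z _, ← hz]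
    rfl

noncomputable def glueSquare (w : f ≫ MapOverPrecomp pU π u = ∂Δ[n].ι ≫ g) :
    (relBoundary u n).toFunctor ⟶ E where
  app q := TypeCat.ofHom (glueFun f g q)
  naturality q q' ψ := by
    ext y
    exact glueFun_naturality w ψ y

theorem LeftContraction.trivFib_mapOverPrecomp (c : LeftContraction u)
    (hπ : sTrivFib (expComparison' e01 π)) (pU : U ⟶ X) :
    TrivFib (MapOverPrecomp pU π u) := by
  intro n
  refine ⟨fun {f g} sq => ?_⟩
  have ha : glueSquare sq.w ≫ π = (relBoundary u n).ι ≫ fst U (Dc ⦋n⦌) ≫ pU := by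
    ext q y
    exact glueFun_over sq.w q y
  obtain ⟨ℓ, hℓ, hℓπ⟩ := c.exists_extension hπ pU n _ ha
  have hℓ_app q y : ℓ.app q y.1 = glueFun f g q y := types_congr_hom (NatTrans.congr_app hℓ q) y
  refine ⟨⟨⟨MapOver.ofHom ℓ hℓπ, ?_, ?_⟩⟩⟩
  · ext q a ⟨k, hk⟩
    exact (MapOver.eval_ofHom ℓ hℓπ q a k).trans
      ((hℓ_app q ⟨(a, stdSimplex.objEquiv k), Or.inl hk⟩).trans
        (glueFun_of_not_surjective q ⟨(a, stdSimplex.objEquiv k), Or.inl hk⟩ hk))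
  · ext q z k
    exact (MapOver.eval_ofHom ℓ hℓπ q _ k).trans
      ((hℓ_app q ⟨(u.app q z, stdSimplex.objEquiv k), Or.inr ⟨z, rfl⟩⟩).trans
        (glueFun_of_point sq.w q ⟨(u.app q z, stdSimplex.objEquiv k), Or.inr ⟨z, rfl⟩⟩ z rfl))

end Gluing

section Homotopy

open CartesianMonoidalCategory

lemma eq_const_of_not_surjective {m : SimplexCategory} (s : m ⟶ ⦋1⦌)
    (hs : ¬ Function.Surjective s.toOrderHom) :
    s = SimplexCategory.const m ⦋1⦌ (s.toOrderHom 0) := by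
  apply SimplexCategory.Hom.ext
  ext i : 2
  change s.toOrderHom i = s.toOrderHom 0
  by_contra hne
  refine hs fun v => ?_
  by_cases hv : v = s.toOrderHom 0
  · exact ⟨0, hv.symm⟩
  · have key : ∀ a b v : Fin 2, a ≠ b → v ≠ b → a = v := by decide
    exact ⟨i, key _ _ _ hne hv⟩

lemma cylIncl_app (i : Fin 2) (A : sSp) (q : (SimplexCategory × SimplexCategory)ᵒᵖ)
    (a : A.obj q) : (cylIncl i A).app q a = (a, SimplexCategory.const _ ⦋1⦌ i) := by
  refine Prod.ext rfl ?_
  apply SimplexCategory.Hom.ext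
  ext j : 2
  fin_cases i <;> rfl

lemma not_surjective_const (m : SimplexCategory) (j : Fin 2) :
    ¬ Function.Surjective (SimplexCategory.const m ⦋1⦌ j).toOrderHom := fun h => by
  obtain ⟨x, hx⟩ := h j.rev
  have : j ≠ j.rev := by fin_cases j <;> decide
  exact this hx

variable {Z A E : sSp} {pA : A ⟶ Z} {pE : E ⟶ Z}

noncomputable def MapOver.boundaryOneMk (f g : A ⟶ E) (hf : f ≫ pE = pA) (hg : g ≫ pE = pA) :
    (∂Δ[1] : SSet) ⟶ MapOver Z A E pA pE where
  app m := TypeCat.ofHom fun k =>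
    ⟨fst A (Dc m.unop) ≫ if (stdSimplex.objEquiv k.1).toOrderHom 0 = 0 then f else g, by
      split <;> simp [hf, hg]⟩
  naturality m m' ψ := by
    ext ⟨k, hk⟩
    apply Subtype.ext
    change fst A (Dc m'.unop) ≫ (if (ψ.unop ≫ stdSimplex.objEquiv k).toOrderHom 0 = 0 then f else g)
      = (A ◁ DcHom ψ.unop) ≫ fst A (Dc m.unop) ≫ _
    rw [← Category.assoc, whiskerLeft_fst, eq_const_of_not_surjective (stdSimplex.objEquiv k) hk]
    rfl

variable {A' : sSp}

theorem htpyOver_of_hasLiftingProperty (i : A' ⟶ A)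
    [HasLiftingProperty ∂Δ[1].ι (MapOverPrecomp pA pE i)]
    (f g : A ⟶ E) (hf : f ≫ pE = pA) (hg : g ≫ pE = pA)
    (hfg : HtpyOver (i ≫ pA) pE ⟨i ≫ f, by rw [Category.assoc, hf]⟩
      ⟨i ≫ g, by rw [Category.assoc, hg]⟩) :
    HtpyOver pA pE ⟨f, hf⟩ ⟨g, hg⟩ := by
  obtain ⟨h, hπ, h₀, h₁⟩ := hfg
  have sq : CommSq (MapOver.boundaryOneMk f g hf hg) ∂Δ[1].ι (MapOverPrecomp pA pE i)
      (MapOver.ofHom h hπ) := ⟨by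
    ext q a ⟨k, hk⟩
    change (if (stdSimplex.objEquiv k).toOrderHom 0 = 0 then f else g).app q (i.app q a) =
      MapOver.eval (MapOver.ofHom h hπ) q a k
    refine Eq.trans ?_ (MapOver.eval_ofHom h hπ q a k).symm
    rw [eq_const_of_not_surjective (stdSimplex.objEquiv k) hk]
    generalize (stdSimplex.objEquiv k).toOrderHom 0 = v
    fin_cases v
    · exact (types_congr_hom (NatTrans.congr_app h₀ q) a).symm.trans
        (congrArg (h.app q) (cylIncl_app 0 A' q a))
    · exact (types_congr_hom (NatTrans.congr_app h₁ q) a).symm.trans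
        (congrArg (h.app q) (cylIncl_app 1 A' q a))⟩
  let H := (sq.lift.app (.op ⦋1⦌) (stdSimplex.objEquiv.symm (𝟙 ⦋1⦌))).1
  have hend (j : Fin 2) : cylIncl j A ≫ H = if j = 0 then f else g := by
    apply NatTrans.ext; funext q; ext a
    let k : (∂Δ[1] : SSet).obj (.op q.unop.2) :=
      ⟨stdSimplex.objEquiv.symm (SimplexCategory.const _ ⦋1⦌ j), not_surjective_const _ j⟩
    calc (cylIncl j A ≫ H).app q a = H.app q (a, SimplexCategory.const _ ⦋1⦌ j) :=
          congrArg (H.app q) (cylIncl_app j A q a)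
      _ = MapOver.eval sq.lift q a k.1 := MapOver.app_apply_eq_eval _ _ q a _
      _ = (if j = 0 then f else g).app q a := congrArg (fun v => (Subtype.val v).app q (a, 𝟙 _))
          (types_congr_hom (NatTrans.congr_app sq.fac_left (.op q.unop.2)) k)
  exact ⟨H, (sq.lift.app _ _).2, (hend 0).trans (if_pos rfl), (hend 1).trans (if_neg (by decide))⟩

end Homotopy

theorem evaluation_at_id_trivFib (E X : sSp) (π : E ⟶ X) (hπ : LeftFib π)
    (x : F 0 ⟶ X) :
    TrivFib (MapOverPrecomp (underProj x) π (idEdge x)) ∧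
    (∀ (f g : underCat x ⟶ E) (hf : f ≫ π = underProj x)
        (hg : g ≫ π = underProj x),
      HtpyOver (idEdge x ≫ underProj x) π
        ⟨idEdge x ≫ f, by rw [Category.assoc, hf]⟩
        ⟨idEdge x ≫ g, by rw [Category.assoc, hg]⟩ →
      HtpyOver (underProj x) π ⟨f, hf⟩ ⟨g, hg⟩) := by
  have htriv := (underCatContraction x).trivFib_mapOverPrecomp hπ.2 (underProj x)
  have := htriv 1
  exact ⟨htriv, fun f g hf hg => htpyOver_of_hasLiftingProperty (idEdge x) f g hf hg⟩

end KQ
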